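/- arXiv:2508.17507 — 5 statements merged into one kernel-verified Lean document; each statement's English description precedes it below -/
import Mathlib

section
/- Let $(\Omega,\mathcal{F},P)$ be a probability space with a filtration $(\mathcal{F}_n)_{n\in\mathbb{Z}}$, let $K \geq 1$ be an integer, and let $Y_1,\dots,Y_N$ be an adapted sequence of random variables with $|Y_n| \le 1$ a.s. for all $n$. Then for any $\epsilon \in (0, 0.7)$, $P\left(\left|\sum_{n=1}^N (Y_n - \mathbb{E}(Y_n \mid \mathcal{F}_{n-K}))\right| \ge 4\sqrt{K(N+K)\ln(1/\epsilon)}\right) < \epsilon$. -/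
/-!
Let `X n = Y n - E(Y n | ℱ (n - K))` and `S = ∑ n ∈ [1, N], X n`. Writing `exp (t * X n)` as
`exp (-t * E(Y n | ℱ (n - K))) * exp (t * Y n)` and using `exp x ≤ 1 + x + x ^ 2` on `[-1, 1]`
gives `E(exp (t * X n) | ℱ (n - K)) ≤ exp (t ^ 2)` for `|t| ≤ 1`. Indices in one residue class
mod `K` are at least `K` apart, so peeling off the largest index bounds the exponential moment
of a class sum by `exp (t ^ 2 * size)`. Hölder's inequality with the `K` exponents `1 / K`
combines the classes into `E(exp (λ * S)) ≤ exp (λ ^ 2 * K * N)` for `|λ * K| ≤ 1`. The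
Chernoff bound on both tails at `λ = T / (2 * K * (N + K))` then gives
`P(|S| ≥ T) ≤ 2 * ε ^ 4 < ε`, unless `T > 2 * N`, where the event is null as `|S| ≤ 2 * N`.
-/

open MeasureTheory ProbabilityTheory Real

lemma Real.exp_le_one_add_add_sq {x : ℝ} (hx : |x| ≤ 1) : exp x ≤ 1 + x + x ^ 2 := by
  linarith [(abs_le.1 (abs_exp_sub_one_sub_id_le hx)).2]

section

open Finset

variable {Ω ι : Type*} {m m0 : MeasurableSpace Ω} {P : Measure Ω}

lemma ae_norm_exp_mul_le {f : Ω → ℝ} {M : ℝ} (hfb : ∀ᵐ ω ∂P, |f ω| ≤ M) (t : ℝ) :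
    ∀ᵐ ω ∂P, ‖exp (t * f ω)‖ ≤ exp (|t| * M) := by
  filter_upwards [hfb] with ω h
  rw [norm_of_nonneg (exp_pos _).le, exp_le_exp]
  exact (le_abs_self _).trans (by rw [abs_mul]; gcongr)

lemma integrable_exp_mul_of_ae_abs_le [IsFiniteMeasure P] {f : Ω → ℝ} {M : ℝ}
    (hf : AEStronglyMeasurable f P) (hfb : ∀ᵐ ω ∂P, |f ω| ≤ M) (t : ℝ) :
    Integrable (fun ω => exp (t * f ω)) P :=
  .of_bound (by fun_prop) _ (ae_norm_exp_mul_le hfb t)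

lemma ae_abs_sum_le {X : ι → Ω → ℝ} {C : ℝ} (hXb : ∀ᵐ ω ∂P, ∀ n, |X n ω| ≤ C)
    (s : Finset ι) : ∀ᵐ ω ∂P, |∑ n ∈ s, X n ω| ≤ C * #s := by
  filter_upwards [hXb] with ω h
  refine (abs_sum_le_sum_abs _ _).trans ?_
  simpa [mul_comm] using sum_le_card_nsmul s _ C fun n _ => h n

lemma integral_mul_le_of_condExp_le [IsFiniteMeasure P] (hm : m ≤ m0) {W Z : Ω → ℝ}
    {B c : ℝ} (hW : StronglyMeasurable[m] W) (hW0 : 0 ≤ᵐ[P] W)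
    (hWB : ∀ᵐ ω ∂P, ‖W ω‖ ≤ B)
    (hZ : Integrable Z P) (hZc : P[Z|m] ≤ᵐ[P] fun _ => c) :
    ∫ ω, W ω * Z ω ∂P ≤ c * ∫ ω, W ω ∂P := by
  have hWm : AEStronglyMeasurable W P := (hW.mono hm).aestronglyMeasurable
  calc ∫ ω, W ω * Z ω ∂P = ∫ ω, P[W * Z|m] ω ∂P := (integral_condExp hm).symm
    _ = ∫ ω, W ω * P[Z|m] ω ∂P :=
        integral_congr_ae (condExp_stronglyMeasurable_mul_of_bound hm hW hZ B hWB)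
    _ ≤ ∫ ω, W ω * c ∂P := by
        refine integral_mono_ae (integrable_condExp.bdd_mul hWm hWB)
          ((Integrable.of_bound hWm B hWB).mul_const c) ?_
        filter_upwards [hW0, hZc] with ω h0 hc using mul_le_mul_of_nonneg_left hc h0
    _ = c * ∫ ω, W ω ∂P := by rw [integral_mul_const, mul_comm]

lemma condExp_exp_mul_le [IsFiniteMeasure P] (hm : m ≤ m0) {Y : Ω → ℝ}
    (hY : AEStronglyMeasurable Y P) (hYb : ∀ᵐ ω ∂P, |Y ω| ≤ 1) {t : ℝ}
    (ht : |t| ≤ 1) :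
    P[fun ω => exp (t * Y ω)|m] ≤ᵐ[P] fun ω => t * P[Y|m] ω + (1 + t ^ 2) := by
  have hYint : Integrable Y P := .of_bound hY 1 hYb
  have hquad : (fun ω => exp (t * Y ω)) ≤ᵐ[P] fun ω => t * Y ω + (1 + t ^ 2) := by
    filter_upwards [hYb] with ω hY1
    have htY : (t * Y ω) ^ 2 ≤ t ^ 2 := by
      rw [mul_pow, ← sq_abs (Y ω)]
      exact mul_le_of_le_one_right (sq_nonneg t) (pow_le_one₀ (abs_nonneg _) hY1)
    have := exp_le_one_add_add_sq (x := t * Y ω) (by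
      rw [abs_mul]; exact mul_le_one₀ ht (abs_nonneg _) hY1)
    linarith
  refine (condExp_mono (integrable_exp_mul_of_ae_abs_le hY hYb t)
    ((hYint.const_mul t).add (integrable_const _)) hquad).trans_eq ?_
  filter_upwards [condExp_add (hYint.smul t) (integrable_const (1 + t ^ 2)) m,
    condExp_smul (μ := P) t Y m] with ω hadd hsmul
  change P[t • Y + fun _ => 1 + t ^ 2|m] ω = _
  rw [hadd, Pi.add_apply, hsmul, condExp_const hm]
  rfl

lemma condExp_exp_mul_sub_condExp_le [IsFiniteMeasure P] (hm : m ≤ m0) {Y : Ω → ℝ}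
    (hY : AEStronglyMeasurable Y P) (hYb : ∀ᵐ ω ∂P, |Y ω| ≤ 1) {t : ℝ}
    (ht : |t| ≤ 1) :
    P[fun ω => exp (t * (Y ω - P[Y|m] ω))|m] ≤ᵐ[P] fun _ => exp (t ^ 2) := by
  set μY := P[Y|m]
  have hsplit : (fun ω => exp (t * (Y ω - μY ω)))
      = (fun ω => exp (-t * μY ω)) * fun ω => exp (t * Y ω) := by
    ext ω; rw [Pi.mul_apply, ← exp_add]; ring_nf
  have hpull : P[fun ω => exp (t * (Y ω - μY ω))|m]
      =ᵐ[P] fun ω => exp (-t * μY ω) * P[fun ω => exp (t * Y ω)|m] ω := by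
    rw [hsplit]
    refine condExp_stronglyMeasurable_mul_of_bound hm
      (continuous_exp.comp_stronglyMeasurable (stronglyMeasurable_condExp.const_mul _))
      (integrable_exp_mul_of_ae_abs_le hY hYb t) (exp (|-t| * 1)) (ae_norm_exp_mul_le ?_ _)
    exact ae_bdd_abs_condExp_of_ae_bdd_abs hYb
  filter_upwards [hpull, condExp_exp_mul_le hm hY hYb ht] with ω hp hc
  rw [hp]
  calc exp (-t * μY ω) * P[fun ω => exp (t * Y ω)|m] ω
      ≤ exp (-t * μY ω) * exp (t * μY ω + t ^ 2) := by
        gcongr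
        linarith [add_one_le_exp (t * μY ω + t ^ 2)]
    _ = exp (t ^ 2) := by rw [← exp_add]; ring_nf

lemma integral_exp_mul_sum_le_of_modEq [IsProbabilityMeasure P] {ℱ : Filtration ℤ m0} {K : ℕ}
    {X : ℤ → Ω → ℝ} {C t c : ℝ} (hX : ∀ n, StronglyMeasurable[ℱ n] (X n))
    (hXb : ∀ᵐ ω ∂P, ∀ n, |X n ω| ≤ C)
    (hstep : ∀ n, P[fun ω => exp (t * X n ω)|ℱ (n - K)] ≤ᵐ[P] fun _ => exp c)
    (s : Finset ℤ) (hs : ∀ a ∈ s, ∀ b ∈ s, a ≡ b [ZMOD K]) :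
    ∫ ω, exp (t * ∑ n ∈ s, X n ω) ∂P ≤ exp (c * #s) := by
  induction s using Finset.induction_on_max with
  | empty => simp
  | insert a s hlt ih =>
    have ha : a ∉ s := fun h => lt_irrefl a (hlt a h)
    have hsep : ∀ b ∈ s, b ≤ a - K := fun b hb => by
      have hdvd := (hs b (mem_insert_of_mem hb) a (mem_insert_self a s)).dvd
      linarith [Int.le_of_dvd (sub_pos.2 (hlt b hb)) hdvd]
    have hW : StronglyMeasurable[ℱ (a - K)] fun ω => exp (t * ∑ n ∈ s, X n ω) :=
      continuous_exp.comp_stronglyMeasurable ((stronglyMeasurable_fun_sum s fun n hn =>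
        (hX n).mono (ℱ.mono (hsep n hn))).const_mul t)
    have hXa : Integrable (fun ω => exp (t * X a ω)) P :=
      integrable_exp_mul_of_ae_abs_le ((hX a).mono (ℱ.le a)).aestronglyMeasurable
        (hXb.mono fun _ h => h a) t
    calc ∫ ω, exp (t * ∑ n ∈ insert a s, X n ω) ∂P
        = ∫ ω, exp (t * ∑ n ∈ s, X n ω) * exp (t * X a ω) ∂P := by
          simp_rw [sum_insert ha, mul_add, exp_add, mul_comm]
      _ ≤ exp c * ∫ ω, exp (t * ∑ n ∈ s, X n ω) ∂P :=
          integral_mul_le_of_condExp_le (ℱ.le _) hW (.of_forall fun _ => (exp_pos _).le)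
            (ae_norm_exp_mul_le (ae_abs_sum_le hXb s) t) hXa (hstep a)
      _ ≤ exp c * exp (c * #s) := by
          gcongr
          exact ih fun x hx y hy => hs x (mem_insert_of_mem hx) y (mem_insert_of_mem hy)
      _ = exp (c * #(insert a s)) := by
          rw [← exp_add, card_insert_of_notMem ha]
          push_cast
          ring_nf

lemma ENNReal.ofReal_exp_sum_div_card (s : Finset ι) (a : ι → ℝ) :
    ENNReal.ofReal (exp ((∑ i ∈ s, a i) / #s))
      = ∏ i ∈ s, ENNReal.ofReal (exp (a i)) ^ (#s : ℝ)⁻¹ := by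
  simp_rw [ENNReal.ofReal_rpow_of_pos (exp_pos _), ← exp_mul,
    ← ENNReal.ofReal_prod_of_nonneg fun _ _ => (exp_pos _).le, ← exp_sum, sum_div,
    div_eq_mul_inv]

lemma integral_exp_sum_div_card_le (s : Finset ι) (hs : s.Nonempty) {g : ι → Ω → ℝ}
    {c : ι → ℝ} (hg : ∀ i ∈ s, Integrable (fun ω => exp (g i ω)) P)
    (hgc : ∀ i ∈ s, ∫ ω, exp (g i ω) ∂P ≤ exp (c i)) :
    ∫ ω, exp ((∑ i ∈ s, g i ω) / #s) ∂P ≤ exp ((∑ i ∈ s, c i) / #s) := by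
  have hgm : ∀ i ∈ s, AEMeasurable (g i) P := fun i hi =>
    aemeasurable_of_aemeasurable_exp (hg i hi).aemeasurable
  rw [integral_eq_lintegral_of_nonneg_ae (.of_forall fun _ => (exp_pos _).le)
    (continuous_exp.comp_aestronglyMeasurable
      ((aemeasurable_fun_sum s hgm).div_const _).aestronglyMeasurable)]
  refine ENNReal.toReal_le_of_le_ofReal (exp_pos _).le ?_
  simp_rw [ENNReal.ofReal_exp_sum_div_card]
  have hcard : (0 : ℝ) < #s := by exact_mod_cast hs.card_pos
  calc ∫⁻ ω, ∏ i ∈ s, ENNReal.ofReal (exp (g i ω)) ^ (#s : ℝ)⁻¹ ∂P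
      ≤ ∏ i ∈ s, (∫⁻ ω, ENNReal.ofReal (exp (g i ω)) ∂P) ^ (#s : ℝ)⁻¹ :=
        ENNReal.lintegral_prod_norm_pow_le s (fun i hi => (hg i hi).aemeasurable.ennreal_ofReal)
          (by simp [hcard.ne']) fun _ _ => by positivity
    _ ≤ ∏ i ∈ s, ENNReal.ofReal (exp (c i)) ^ (#s : ℝ)⁻¹ := by
        refine prod_le_prod' fun i hi => ENNReal.rpow_le_rpow ?_ (by positivity)
        rw [← ofReal_integral_eq_lintegral_ofReal (hg i hi) (.of_forall fun _ => (exp_pos _).le)]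
        exact ENNReal.ofReal_le_ofReal (hgc i hi)

lemma integral_exp_mul_sum_le_of_condExp_le [IsProbabilityMeasure P] {ℱ : Filtration ℤ m0}
    {K : ℕ} (hK : 1 ≤ K) {X : ℤ → Ω → ℝ} {C : ℝ}
    (hX : ∀ n, StronglyMeasurable[ℱ n] (X n)) (hXb : ∀ᵐ ω ∂P, ∀ n, |X n ω| ≤ C)
    (hstep : ∀ t : ℝ, |t| ≤ 1 → ∀ n,
      P[fun ω => exp (t * X n ω)|ℱ (n - K)] ≤ᵐ[P] fun _ => exp (t ^ 2))
    (s : Finset ℤ) {l : ℝ} (hl : |l * K| ≤ 1) :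
    ∫ ω, exp (l * ∑ n ∈ s, X n ω) ∂P ≤ exp (l ^ 2 * K * #s) := by
  have hK0 : (0 : ℤ) < K := by exact_mod_cast hK
  have hmaps : ∀ n ∈ s, n % (K : ℤ) ∈ Ico (0 : ℤ) K := fun n _ =>
    mem_Ico.2 ⟨Int.emod_nonneg n hK0.ne', Int.emod_lt_of_pos n hK0⟩
  have hcardK : ((#(Ico (0 : ℤ) K) : ℕ) : ℝ) = K := by simp
  calc ∫ ω, exp (l * ∑ n ∈ s, X n ω) ∂P
      = ∫ ω, exp ((∑ r ∈ Ico (0 : ℤ) K, l * K * ∑ n ∈ s with n % (K : ℤ) = r, X n ω)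
          / #(Ico (0 : ℤ) K)) ∂P := by
        congr! 3 with ω
        rw [← mul_sum, sum_fiberwise_of_maps_to hmaps, hcardK]
        field_simp
    _ ≤ exp ((∑ r ∈ Ico (0 : ℤ) K, (l * K) ^ 2 * #{n ∈ s | n % (K : ℤ) = r})
          / #(Ico (0 : ℤ) K)) := by
        refine integral_exp_sum_div_card_le _ (nonempty_Ico.2 hK0) (fun r _ => ?_) fun r _ => ?_
        · exact integrable_exp_mul_of_ae_abs_le (aestronglyMeasurable_fun_sum _ fun n _ =>
            ((hX n).mono (ℱ.le n)).aestronglyMeasurable) (ae_abs_sum_le hXb _) _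
        · exact integral_exp_mul_sum_le_of_modEq hX hXb (hstep _ hl) _
            fun a ha b hb => ((mem_filter.1 ha).2.trans (mem_filter.1 hb).2.symm)
    _ = exp (l ^ 2 * K * #s) := by
        rw [← mul_sum, hcardK, card_eq_sum_card_fiberwise hmaps]
        push_cast
        field_simp

lemma measureReal_le_abs_le_exp_mul_mgf [IsFiniteMeasure P] {S : Ω → ℝ} {M : ℝ}
    (hS : AEStronglyMeasurable S P) (hSb : ∀ᵐ ω ∂P, |S ω| ≤ M) (T : ℝ) {l : ℝ}
    (hl : 0 ≤ l) :
    P.real {ω | T ≤ |S ω|} ≤ exp (-l * T) * (mgf S P l + mgf S P (-l)) := by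
  have hsplit : {ω | T ≤ |S ω|} ⊆ {ω | T ≤ S ω} ∪ {ω | S ω ≤ -T} :=
    fun ω (hω : T ≤ |S ω|) => (le_abs'.1 hω).symm
  calc P.real {ω | T ≤ |S ω|}
      ≤ P.real {ω | T ≤ S ω} + P.real {ω | S ω ≤ -T} :=
        (measureReal_mono hsplit).trans (measureReal_union_le _ _)
    _ ≤ exp (-l * T) * mgf S P l + exp (-(-l) * -T) * mgf S P (-l) :=
        add_le_add (measure_ge_le_exp_mul_mgf T hl (integrable_exp_mul_of_ae_abs_le hS hSb l))
          (measure_le_le_exp_mul_mgf (-T) (neg_nonpos.2 hl)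
            (integrable_exp_mul_of_ae_abs_le hS hSb (-l)))
    _ = exp (-l * T) * (mgf S P l + mgf S P (-l)) := by ring_nf

lemma measureReal_le_abs_le_of_mgf_le [IsFiniteMeasure P] {S : Ω → ℝ} {M a r T : ℝ}
    (hS : AEStronglyMeasurable S P) (hSb : ∀ᵐ ω ∂P, |S ω| ≤ M) (ha : 0 < a) (hT : 0 ≤ T)
    (hTr : T ≤ 2 * a * r) (hmgf : ∀ l, |l| ≤ r → mgf S P l ≤ exp (a * l ^ 2)) :
    P.real {ω | T ≤ |S ω|} ≤ 2 * exp (-(T ^ 2 / (4 * a))) := by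
  set l := T / (2 * a)
  have hlr : |l| ≤ r := by
    rw [abs_of_nonneg (by positivity), div_le_iff₀ (by positivity)]
    linarith
  calc P.real {ω | T ≤ |S ω|} ≤ exp (-l * T) * (mgf S P l + mgf S P (-l)) :=
        measureReal_le_abs_le_exp_mul_mgf hS hSb T (by positivity)
    _ ≤ exp (-l * T) * (exp (a * l ^ 2) + exp (a * (-l) ^ 2)) := by
        gcongr
        · exact hmgf l hlr
        · exact hmgf (-l) (by rwa [abs_neg])
    _ = 2 * exp (-(T ^ 2 / (4 * a))) := by
        rw [neg_sq, ← two_mul, mul_left_comm, ← exp_add]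
        congr 2
        simp only [l]
        field_simp
        ring

lemma measure_le_abs_lt_of_mgf_le [IsProbabilityMeasure P] {S : Ω → ℝ} {k n ε : ℝ}
    (hk : 0 < k) (hn : 0 ≤ n) (hS : AEStronglyMeasurable S P)
    (hSb : ∀ᵐ ω ∂P, |S ω| ≤ 2 * n)
    (hmgf : ∀ l, |l * k| ≤ 1 → mgf S P l ≤ exp (l ^ 2 * k * n))
    (hε : ε ∈ Set.Ioo (0 : ℝ) 0.7) :
    P {ω | 4 * √(k * (n + k) * log (1 / ε)) ≤ |S ω|} < ENNReal.ofReal ε := by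
  obtain ⟨hε0, hε7⟩ := hε
  set L := log (1 / ε)
  set T := 4 * √(k * (n + k) * L)
  have hL : 0 < L := log_pos (by rw [lt_div_iff₀ hε0]; linarith)
  by_cases hT : 2 * n < T
  · have hnull : P {ω | T ≤ |S ω|} = 0 := by
      refine measure_eq_zero_iff_ae_notMem.2 ?_
      filter_upwards [hSb] with ω h
      simpa using h.trans_lt hT
    rw [hnull]
    exact ENNReal.ofReal_pos.2 hε0
  have hmgf' : ∀ l, |l| ≤ k⁻¹ → mgf S P l ≤ exp (k * (n + k) * l ^ 2) := fun l hl => by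
    refine (hmgf l ?_).trans (exp_le_exp.2 (by nlinarith [mul_nonneg (sq_nonneg l) (sq_nonneg k)]))
    rwa [abs_mul, abs_of_pos hk, ← le_div_iff₀ hk, one_div]
  have htail := measureReal_le_abs_le_of_mgf_le (T := T) hS hSb (by positivity) (by positivity)
    (by field_simp; linarith) hmgf'
  have hexponent : -(T ^ 2 / (4 * (k * (n + k)))) = (4 : ℕ) * log ε := by
    rw [mul_pow, sq_sqrt (by positivity)]
    field_simp
    simp only [L, one_div, log_inv]
    push_cast
    ring
  rw [← ofReal_measureReal, ENNReal.ofReal_lt_ofReal_iff hε0]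
  calc P.real {ω | T ≤ |S ω|} ≤ 2 * ε ^ 4 := by
        rwa [hexponent, exp_nat_mul, exp_log hε0] at htail
    _ < ε := by nlinarith [pow_le_pow_left₀ hε0.le hε7.le 3]

end

theorem lln_K_steps_ahead
    {Ω : Type*} [m0 : MeasurableSpace Ω] (P : Measure Ω) [IsProbabilityMeasure P]
    (ℱ : Filtration ℤ m0) (K : ℕ) (hK : 1 ≤ K) (N : ℕ)
    (Y : ℤ → Ω → ℝ)
    (hadapt : ∀ n : ℤ, StronglyMeasurable[ℱ n] (Y n))
    (hbdd : ∀ n : ℤ, ∀ᵐ ω ∂P, |Y n ω| ≤ 1)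
    (ε : ℝ) (hε : ε ∈ Set.Ioo (0 : ℝ) 0.7) :
    P {ω | 4 * Real.sqrt (K * (N + K) * Real.log (1 / ε)) ≤
        |∑ n ∈ Finset.Icc (1 : ℤ) N, (Y n ω - (P[Y n|ℱ (n - K)]) ω)|}
      < ENNReal.ofReal ε := by
  set X : ℤ → Ω → ℝ := fun n => Y n - P[Y n|ℱ (n - K)]
  have hX : ∀ n, StronglyMeasurable[ℱ n] (X n) := fun n =>
    (hadapt n).sub (stronglyMeasurable_condExp.mono (ℱ.mono (by omega)))
  have hXb : ∀ᵐ ω ∂P, ∀ n, |X n ω| ≤ 2 := ae_all_iff.2 fun n => by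
    filter_upwards [hbdd n, ae_bdd_abs_condExp_of_ae_bdd_abs (m := ℱ (n - K)) (hbdd n)]
      with ω hY hμ
    exact (abs_sub _ _).trans (by linarith)
  have hstep : ∀ t : ℝ, |t| ≤ 1 → ∀ n,
      P[fun ω => exp (t * X n ω)|ℱ (n - K)] ≤ᵐ[P] fun _ => exp (t ^ 2) := fun t ht n =>
    condExp_exp_mul_sub_condExp_le (ℱ.le _) ((hadapt n).mono (ℱ.le n)).aestronglyMeasurable
      (hbdd n) ht
  have hcard : ((Finset.Icc (1 : ℤ) N).card : ℝ) = N := by simp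
  refine measure_le_abs_lt_of_mgf_le (S := fun ω => ∑ n ∈ Finset.Icc (1 : ℤ) N, X n ω)
    (by exact_mod_cast hK) N.cast_nonneg ?_ ?_ (fun l hl => ?_) hε
  · exact (Finset.stronglyMeasurable_fun_sum _ fun n _ =>
      (hX n).mono (ℱ.le n)).aestronglyMeasurable
  · simpa [hcard, mul_comm] using ae_abs_sum_le hXb (Finset.Icc (1 : ℤ) N)
  · simpa [mgf, hcard] using
      integral_exp_mul_sum_le_of_condExp_le hK hX hXb hstep (Finset.Icc 1 N) hl
end

section
/- Let $(\Omega,\mathcal{F},P)$ be a probability space with filtration $(\mathcal{F}_n)_{n\in\mathbb{Z}}$, $K \ge 1$ an integer, and $Y_1,\dots,Y_N$ an adapted sequence with $|Y_n| \le 1$ a.s. Suppose additionally $\mathbb{E}(Y_n \mid \mathcal{F}_{n-K}) \le 0$ a.s. for all $n$. Then for any $\epsilon \in (0,0.7)$, $P\left(\sum_{n=1}^N Y_n \ge 4\sqrt{K(N+K)\ln(1/\epsilon)}\right) < \epsilon/2$. -/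
/-!
Pad `Y` by zeros to `K * M` terms with `N ≤ K * M ≤ N + K` and split them into the `K` residue
classes mod `K`. Within a class consecutive indices are `K` apart, so each term has nonpositive
conditional mean given all earlier terms of its class; with the convexity bound
`exp (θ x) ≤ cosh θ + x sinh θ` on `[-1, 1]` and `cosh θ ≤ exp (θ² / 2)` this gives
`E exp (θ S_r) ≤ exp (M θ² / 2)` for each class sum `S_r`. Jensen's inequality
`exp (∑ r, x r) ≤ K⁻¹ ∑ r, exp (K x r)` combines the classes into
`E exp (θ S) ≤ exp (K² M θ² / 2)`, and the Chernoff bound at `θ = t / (K² M)` gives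
`P (t ≤ S) ≤ exp (-t² / (2 K² M))`, which for `t = 4 √(K (N + K) log (1 / ε))` is at most
`ε⁸ < ε / 2`.
-/

open MeasureTheory ProbabilityTheory Real Finset

lemma Real.exp_sum_le_sum_exp_card_mul_div {ι : Type*} {s : Finset ι} (hs : s.Nonempty)
    (x : ι → ℝ) : exp (∑ i ∈ s, x i) ≤ (∑ i ∈ s, exp (#s * x i)) / #s := by
  have hcard : (#s : ℝ) ≠ 0 := by exact_mod_cast hs.card_pos.ne'
  have := convexOn_exp.map_sum_le (t := s) (w := fun _ => (#s : ℝ)⁻¹)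
    (p := fun i => #s * x i) (fun _ _ => by positivity) (by simp [hcard])
    (fun _ _ => Set.mem_univ _)
  simpa [smul_eq_mul, ← Finset.mul_sum, hcard, div_eq_inv_mul] using this

theorem Finset.sum_Ico_add_mul_eq_sum_sum {β : Type*} [AddCommMonoid β] (f : ℤ → β)
    (a : ℤ) (K M : ℕ) :
    ∑ n ∈ Ico a (a + K * M), f n = ∑ r ∈ range K, ∑ j ∈ range M, f (a + r + K * j) := by
  rcases Nat.eq_zero_or_pos K with rfl | hK
  · simp
  have hK' : (0 : ℤ) < K := by exact_mod_cast hK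
  have hdiv (n : ℤ) := Int.emod_add_mul_ediv (n - a) K
  have hmod (n : ℤ) : 0 ≤ (n - a) % K ∧ (n - a) % K < K :=
    ⟨Int.emod_nonneg _ hK'.ne', Int.emod_lt_of_pos _ hK'⟩
  have hquot {n : ℤ} (hn : n ∈ Ico a (a + K * M)) : 0 ≤ (n - a) / K ∧ (n - a) / K < M := by
    rw [mem_Ico] at hn
    have := hdiv n
    have := hmod n
    constructor <;> nlinarith
  have hleft {n : ℤ} (hn : n ∈ Ico a (a + K * M)) :
      a + ((n - a) % K).toNat + K * ((n - a) / K).toNat = n := by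
    rw [Int.toNat_of_nonneg (hmod n).1, Int.toNat_of_nonneg (hquot hn).1]
    linarith [hdiv n]
  rw [← Finset.sum_product' (f := fun (r j : ℕ) => f (a + r + K * j))]
  refine Finset.sum_nbij' (fun n => (((n - a) % K).toNat, ((n - a) / K).toNat))
    (fun p => a + p.1 + K * p.2) ?_ ?_ (fun _ hn => hleft hn) ?_ (fun _ hn => by rw [hleft hn])
  · intro n hn
    simp only [mem_product, mem_range]
    have := hmod n
    have := hquot hn
    omega
  · intro p hp
    simp only [mem_product, mem_range] at hp
    have h₁ : (p.1 : ℤ) < K := by exact_mod_cast hp.1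
    have h₂ : (p.2 : ℤ) + 1 ≤ M := by exact_mod_cast hp.2
    have : (0 : ℤ) ≤ K * p.2 := by positivity
    simp only [mem_Ico]
    constructor <;> nlinarith
  · intro p hp
    simp only [mem_product, mem_range] at hp
    obtain ⟨hq, hr⟩ := (Int.ediv_emod_unique hK').mpr
      ⟨show (p.1 : ℤ) + K * p.2 = a + p.1 + K * p.2 - a by ring, by positivity, by omega⟩
    simp [hq, hr]

section

variable {Ω : Type*} [m0 : MeasurableSpace Ω] {P : Measure Ω}

lemma ae_abs_sum_le_card {ι : Type*} {X : ι → Ω → ℝ} (s : Finset ι)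
    (hX : ∀ i ∈ s, ∀ᵐ ω ∂P, |X i ω| ≤ 1) : ∀ᵐ ω ∂P, |∑ i ∈ s, X i ω| ≤ #s := by
  filter_upwards [(Filter.eventually_all_finset s).mpr hX] with ω hω
  calc |∑ i ∈ s, X i ω| ≤ ∑ i ∈ s, |X i ω| := abs_sum_le_sum_abs _ _
    _ ≤ ∑ _i ∈ s, 1 := sum_le_sum hω
    _ = #s := by simp

lemma condExp_exp_mul_le_s1 [IsFiniteMeasure P] {m : MeasurableSpace Ω} (hm : m ≤ m0)
    {X : Ω → ℝ} (hX : AEMeasurable X P) (hX₁ : ∀ᵐ ω ∂P, |X ω| ≤ 1)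
    (hX₀ : ∀ᵐ ω ∂P, (P[X|m]) ω ≤ 0) {θ : ℝ} (hθ : 0 ≤ θ) :
    ∀ᵐ ω ∂P, (P[fun ω => exp (θ * X ω)|m]) ω ≤ exp (θ ^ 2 / 2) := by
  have hXi : Integrable X P := .of_bound hX.aestronglyMeasurable 1 hX₁
  have hmono : P[fun ω => exp (θ * X ω)|m] ≤ᵐ[P] P[fun ω => cosh θ + sinh θ * X ω|m] :=
    condExp_mono (integrable_exp_mul_of_le θ 1 hθ hX (hX₁.mono fun _ => le_of_abs_le))
      ((integrable_const _).add (hXi.const_mul _))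
      (hX₁.mono fun ω hω => by simpa only [mul_comm] using exp_mul_le_cosh_add_mul_sinh hω θ)
  have hlin :
      P[fun ω => cosh θ + sinh θ * X ω|m] =ᵐ[P] fun ω => cosh θ + sinh θ * (P[X|m]) ω := by
    have hsmul : P[fun ω => sinh θ * X ω|m] =ᵐ[P] fun ω => sinh θ * (P[X|m]) ω :=
      condExp_smul (sinh θ) X m
    filter_upwards [condExp_add (integrable_const (cosh θ)) (hXi.const_mul (sinh θ)) m, hsmul]
      with ω h₁ h₂
    exact h₁.trans (by rw [Pi.add_apply, h₂, condExp_const hm])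
  filter_upwards [hmono, hlin, hX₀] with ω h₁ h₂ h₃
  calc (P[fun ω => exp (θ * X ω)|m]) ω ≤ cosh θ + sinh θ * (P[X|m]) ω := h₁.trans_eq h₂
    _ ≤ cosh θ := by nlinarith [sinh_nonneg_iff.mpr hθ]
    _ ≤ exp (θ ^ 2 / 2) := cosh_le_exp_half_sq θ

lemma integral_mul_le_of_condExp_le_s1 [IsFiniteMeasure P] {m : MeasurableSpace Ω}
    (hm : m ≤ m0) {f g : Ω → ℝ} (hf : StronglyMeasurable[m] f) (hf₀ : 0 ≤ f) {C : ℝ}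
    (hfC : ∀ᵐ ω ∂P, ‖f ω‖ ≤ C) (hg : Integrable g P) {c : ℝ}
    (hgc : ∀ᵐ ω ∂P, (P[g|m]) ω ≤ c) :
    ∫ ω, f ω * g ω ∂P ≤ c * ∫ ω, f ω ∂P := by
  have hfi : Integrable f P := .of_bound (hf.mono hm).aestronglyMeasurable C hfC
  have hpull : P[f * g|m] =ᵐ[P] f * P[g|m] :=
    condExp_stronglyMeasurable_mul_of_bound hm hf hg C hfC
  calc ∫ ω, f ω * g ω ∂P = ∫ ω, f ω * (P[g|m]) ω ∂P :=
        (integral_condExp hm).symm.trans (integral_congr_ae hpull)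
    _ ≤ ∫ ω, f ω * c ∂P := by
        refine integral_mono_ae (integrable_condExp.congr hpull) (hfi.mul_const c) ?_
        filter_upwards [hgc] with ω hω
        exact mul_le_mul_of_nonneg_left hω (hf₀ ω)
    _ = c * ∫ ω, f ω ∂P := by rw [integral_mul_const, mul_comm]

structure IsBoundedSupermartingaleDiff (P : Measure Ω) (ℱ : Filtration ℤ m0) (K : ℕ)
    (Y : ℤ → Ω → ℝ) : Prop where
  stronglyMeasurable (n : ℤ) : StronglyMeasurable[ℱ n] (Y n)
  abs_le_one (n : ℤ) : ∀ᵐ ω ∂P, |Y n ω| ≤ 1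
  condExp_nonpos (n : ℤ) : ∀ᵐ ω ∂P, (P[Y n|ℱ (n - K)]) ω ≤ 0

namespace IsBoundedSupermartingaleDiff

variable {ℱ : Filtration ℤ m0} {K : ℕ} {Y : ℤ → Ω → ℝ}

lemma indicator (hY : IsBoundedSupermartingaleDiff P ℱ K Y) (s : Set ℤ) :
    IsBoundedSupermartingaleDiff P ℱ K (s.indicator Y) where
  stronglyMeasurable n := by
    by_cases hn : n ∈ s
    · simpa [hn] using hY.stronglyMeasurable n
    · simpa [hn] using stronglyMeasurable_zero
  abs_le_one n := by
    by_cases hn : n ∈ s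
    · simpa [hn] using hY.abs_le_one n
    · simp [hn]
  condExp_nonpos n := by
    by_cases hn : n ∈ s
    · simpa [hn] using hY.condExp_nonpos n
    · simp [hn]

lemma measurable (hY : IsBoundedSupermartingaleDiff P ℱ K Y) (n : ℤ) : Measurable (Y n) :=
  ((hY.stronglyMeasurable n).mono (ℱ.le n)).measurable

lemma ae_abs_sum_le_card (hY : IsBoundedSupermartingaleDiff P ℱ K Y) {ι : Type*}
    (s : Finset ι) (φ : ι → ℤ) : ∀ᵐ ω ∂P, |∑ i ∈ s, Y (φ i) ω| ≤ #s :=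
  _root_.ae_abs_sum_le_card s fun i _ => hY.abs_le_one (φ i)

variable [IsProbabilityMeasure P]

lemma mgf_sum_arithProg_le (hY : IsBoundedSupermartingaleDiff P ℱ K Y) {θ : ℝ} (hθ : 0 ≤ θ)
    (a : ℤ) (M : ℕ) :
    mgf (fun ω => ∑ j ∈ range M, Y (a + K * j) ω) P θ ≤ exp (M * θ ^ 2 / 2) := by
  induction M with
  | zero => simp [mgf]
  | succ M ih =>
    set n := a + K * M
    set F := fun ω => ∑ j ∈ range M, Y (a + K * j) ω
    have hF : StronglyMeasurable[ℱ (n - K)] F := by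
      refine Finset.stronglyMeasurable_fun_sum _ fun j hj => (hY.stronglyMeasurable _).mono
        (ℱ.mono ?_)
      have : (j : ℤ) + 1 ≤ M := by exact_mod_cast mem_range.mp hj
      nlinarith
    have hexpF : ∀ᵐ ω ∂P, ‖exp (θ * F ω)‖ ≤ exp (θ * M) := by
      filter_upwards [hY.ae_abs_sum_le_card (range M) (fun j => a + K * j)] with ω hω
      rw [norm_of_nonneg (exp_pos _).le, exp_le_exp, card_range] at *
      exact mul_le_mul_of_nonneg_left ((le_abs_self _).trans hω) hθ
    calc mgf (fun ω => ∑ j ∈ range (M + 1), Y (a + K * j) ω) P θ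
        = ∫ ω, exp (θ * F ω) * exp (θ * Y n ω) ∂P := by
          simp only [mgf, sum_range_succ, mul_add, exp_add, F, n]
      _ ≤ exp (θ ^ 2 / 2) * ∫ ω, exp (θ * F ω) ∂P :=
          integral_mul_le_of_condExp_le_s1 (ℱ.le _)
            (continuous_exp.comp_stronglyMeasurable (hF.const_mul θ)) (fun _ => (exp_pos _).le)
            hexpF (integrable_exp_mul_of_le θ 1 hθ (hY.measurable n).aemeasurable
              ((hY.abs_le_one n).mono fun _ => le_of_abs_le))
            (condExp_exp_mul_le_s1 (ℱ.le _) (hY.measurable n).aemeasurable (hY.abs_le_one n)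
              (by simpa [n] using hY.condExp_nonpos n) hθ)
      _ ≤ exp (θ ^ 2 / 2) * exp (M * θ ^ 2 / 2) := mul_le_mul_of_nonneg_left ih (exp_pos _).le
      _ = exp ((M + 1 : ℕ) * θ ^ 2 / 2) := by rw [← exp_add]; push_cast; ring_nf

lemma integrable_exp_mul_sum (hY : IsBoundedSupermartingaleDiff P ℱ K Y) {ι : Type*}
    (s : Finset ι) (φ : ι → ℤ) {θ : ℝ} (hθ : 0 ≤ θ) :
    Integrable (fun ω => exp (θ * ∑ i ∈ s, Y (φ i) ω)) P :=
  integrable_exp_mul_of_le θ #s hθ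
    (Finset.measurable_sum _ fun _ _ => hY.measurable _).aemeasurable
    ((hY.ae_abs_sum_le_card s φ).mono fun _ => le_of_abs_le)

lemma mgf_sum_Ico_le (hY : IsBoundedSupermartingaleDiff P ℱ K Y) (hK : 0 < K) {θ : ℝ}
    (hθ : 0 ≤ θ) (a : ℤ) (M : ℕ) :
    mgf (fun ω => ∑ n ∈ Ico a (a + K * M), Y n ω) P θ ≤ exp (K ^ 2 * M * θ ^ 2 / 2) := by
  have hK' : (0 : ℝ) < K := by exact_mod_cast hK
  set S : ℕ → Ω → ℝ := fun r ω => ∑ j ∈ range M, Y (a + r + K * j) ω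
  have hjensen (ω : Ω) : exp (θ * ∑ n ∈ Ico a (a + K * M), Y n ω) ≤
      (∑ r ∈ range K, exp (K * θ * S r ω)) / K := by
    rw [sum_Ico_add_mul_eq_sum_sum, mul_sum]
    simpa [card_range, mul_assoc, S] using
      exp_sum_le_sum_exp_card_mul_div (nonempty_range_iff.mpr hK.ne') fun r => θ * S r ω
  calc mgf (fun ω => ∑ n ∈ Ico a (a + K * M), Y n ω) P θ
      ≤ ∫ ω, (∑ r ∈ range K, exp (K * θ * S r ω)) / K ∂P :=
        integral_mono_of_nonneg (.of_forall fun _ => (exp_pos _).le)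
          ((integrable_finsetSum _ fun _ _ =>
            hY.integrable_exp_mul_sum _ _ (by positivity)).div_const _) (.of_forall hjensen)
    _ = (∑ r ∈ range K, mgf (S r) P (K * θ)) / K := by
        rw [integral_div, integral_finsetSum _ fun _ _ =>
          hY.integrable_exp_mul_sum _ _ (by positivity)]
        rfl
    _ ≤ (∑ _r ∈ range K, exp (M * (K * θ) ^ 2 / 2)) / K := by
        gcongr with r
        simpa [S, add_assoc] using hY.mgf_sum_arithProg_le (by positivity) (a + r) M
    _ = exp (K ^ 2 * M * θ ^ 2 / 2) := by
        rw [sum_const, card_range, nsmul_eq_mul, mul_div_cancel_left₀ _ hK'.ne']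
        ring_nf

lemma measureReal_sum_Ico_ge_le (hY : IsBoundedSupermartingaleDiff P ℱ K Y) (hK : 0 < K)
    (a : ℤ) (M : ℕ) {t : ℝ} (ht : 0 ≤ t) :
    P.real {ω | t ≤ ∑ n ∈ Ico a (a + K * M), Y n ω} ≤ exp (-t ^ 2 / (2 * (K ^ 2 * M))) := by
  set D : ℝ := K ^ 2 * M
  have hθ : 0 ≤ t / D := by positivity
  calc P.real {ω | t ≤ ∑ n ∈ Ico a (a + K * M), Y n ω}
      ≤ exp (-(t / D) * t) * mgf (fun ω => ∑ n ∈ Ico a (a + K * M), Y n ω) P (t / D) :=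
        measure_ge_le_exp_mul_mgf t hθ (hY.integrable_exp_mul_sum _ _ hθ)
    _ ≤ exp (-(t / D) * t) * exp (D * (t / D) ^ 2 / 2) := by
        gcongr
        exact hY.mgf_sum_Ico_le hK hθ a M
    _ = exp (-t ^ 2 / (2 * D)) := by
        rw [← exp_add]
        congr 1
        rcases eq_or_ne D 0 with hD | hD
        · simp [hD]
        · field_simp
          ring

end IsBoundedSupermartingaleDiff

end

lemma exp_neg_sq_div_le_pow_eight {ε A D : ℝ} (hε₀ : 0 < ε) (hε₁ : ε ≤ 1) (hD : 0 < D)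
    (hDA : D ≤ A) : exp (-(4 * √(A * log (1 / ε))) ^ 2 / (2 * D)) ≤ ε ^ 8 := by
  have hL : 0 ≤ log (1 / ε) := log_nonneg (one_le_one_div hε₀ hε₁)
  calc exp (-(4 * √(A * log (1 / ε))) ^ 2 / (2 * D)) ≤ exp (8 * log ε) := by
        rw [exp_le_exp, mul_pow, sq_sqrt (mul_nonneg (hD.le.trans hDA) hL), neg_div, neg_le,
          le_div_iff₀ (by positivity)]
        rw [one_div, log_inv] at hL ⊢
        nlinarith [mul_le_mul_of_nonneg_right hDA hL]
    _ = ε ^ 8 := by rw [← rpow_natCast, rpow_def_of_pos hε₀, mul_comm]; norm_num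

theorem one_sided_lln_K_steps_ahead
    {Ω : Type*} [m0 : MeasurableSpace Ω] (P : Measure Ω) [IsProbabilityMeasure P]
    (ℱ : Filtration ℤ m0) (K : ℕ) (hK : 1 ≤ K) (N : ℕ)
    (Y : ℤ → Ω → ℝ)
    (hadapt : ∀ n : ℤ, StronglyMeasurable[ℱ n] (Y n))
    (hbdd : ∀ n : ℤ, ∀ᵐ ω ∂P, |Y n ω| ≤ 1)
    (hneg : ∀ n : ℤ, ∀ᵐ ω ∂P, (P[Y n|ℱ (n - K)]) ω ≤ 0)
    (ε : ℝ) (hε : ε ∈ Set.Ioo (0 : ℝ) 0.7) :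
    P {ω | 4 * Real.sqrt (K * (N + K) * Real.log (1 / ε)) ≤
        ∑ n ∈ Finset.Icc (1 : ℤ) N, Y n ω}
      < ENNReal.ofReal (ε / 2) := by
  obtain ⟨hε₀, hε₁⟩ := hε
  set M := N / K + 1
  have hNM : N < K * M := Nat.lt_mul_div_succ N hK
  have hMN : K * M ≤ N + K := by rw [mul_add, mul_one]; gcongr; exact Nat.mul_div_le N K
  have hY : IsBoundedSupermartingaleDiff P ℱ K ((Icc (1 : ℤ) N : Set ℤ).indicator Y) :=
    IsBoundedSupermartingaleDiff.indicator ⟨hadapt, hbdd, hneg⟩ _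
  have hsub : Icc (1 : ℤ) N ⊆ Ico 1 (1 + K * M) := by
    have : (N : ℤ) < K * M := by exact_mod_cast hNM
    intro n
    simp only [mem_Icc, mem_Ico]
    omega
  have hsum (ω : Ω) : ∑ n ∈ Icc (1 : ℤ) N, Y n ω =
      ∑ n ∈ Ico (1 : ℤ) (1 + K * M), (Icc (1 : ℤ) N : Set ℤ).indicator Y n ω := by
    rw [← Finset.sum_apply, ← Finset.sum_apply, sum_indicator_subset Y hsub]
  have htail :
      P.real {ω | 4 * √(K * (N + K) * log (1 / ε)) ≤ ∑ n ∈ Icc (1 : ℤ) N, Y n ω} ≤ ε ^ 8 := by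
    simp_rw [hsum]
    refine (hY.measureReal_sum_Ico_ge_le hK 1 M (by positivity)).trans
      (exp_neg_sq_div_le_pow_eight hε₀ (by linarith) (by positivity) ?_)
    rw [sq, mul_assoc]
    gcongr
    exact_mod_cast hMN
  have hε₇ : ε ^ 7 < 1 / 2 := (pow_lt_pow_left₀ hε₁ hε₀.le (by norm_num)).trans (by norm_num)
  rw [← ofReal_measureReal]
  exact (ENNReal.ofReal_lt_ofReal_iff (by linarith)).mpr (htail.trans_lt (by nlinarith))
end

section
/- Let $X_1,\dots,X_K$ be nonnegative random variables (with arbitrary joint distribution) each satisfying $P(X_k \ge x) \le \exp(-a x^2)$ for all $x \ge 0$, where $a = K/(2N)$ for some $N > 0$. Then for any $C > 0$, $P(X_1 + \dots + X_K \ge C) \le \frac{4KN}{C^2} \exp\left(-\frac{C^2}{8KN}\right)$. -/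
/-!
No independence is needed: since `X ≤ (X - t)⁺ + t`, the event `C ≤ ∑ X_k` forces
`C - K t ≤ ∑ (X_k - t)⁺`, and Markov's inequality bounds its probability by
`∑ E (X_k - t)⁺ / (C - K t)`. By the layer-cake formula each `E (X_k - t)⁺` is at most the
Gaussian tail `∫_t^∞ exp (-a x²) dx ≤ exp (-a t²) / (2 a t)`. The choice `t = C / (2K)` gives
the stated bound.
-/

open MeasureTheory ProbabilityTheory Real

open Set Filter Finset

theorem integral_Ioi_mul_exp_neg_mul_sq {a : ℝ} (ha : 0 < a) (t : ℝ) :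
    ∫ x in Ioi t, x * exp (-a * x ^ 2) = exp (-a * t ^ 2) / (2 * a) := by
  have hderiv (x : ℝ) :
      HasDerivAt (fun x => -exp (-a * x ^ 2) / (2 * a)) (x * exp (-a * x ^ 2)) x := by
    refine (((hasDerivAt_pow 2 x).const_mul (-a)).exp.neg.div_const (2 * a)).congr_deriv ?_
    field_simp
    ring
  have hlim : Tendsto (fun x : ℝ => -exp (-a * x ^ 2) / (2 * a)) atTop (nhds (-0 / (2 * a))) :=
    (tendsto_exp_atBot.comp ((tendsto_pow_atTop two_ne_zero).const_mul_atTop_of_neg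
      (neg_lt_zero.2 ha))).neg.div_const _
  rw [integral_Ioi_of_hasDerivAt_of_tendsto' (fun x _ => hderiv x)
    (integrable_mul_exp_neg_mul_sq ha).integrableOn hlim]
  ring

theorem lintegral_Ioi_exp_neg_mul_sq_le {a t : ℝ} (ha : 0 < a) (ht : 0 < t) :
    ∫⁻ x in Ioi t, ENNReal.ofReal (exp (-a * x ^ 2)) ≤
      ENNReal.ofReal (exp (-a * t ^ 2) / (2 * a * t)) :=
  calc ∫⁻ x in Ioi t, ENNReal.ofReal (exp (-a * x ^ 2))
      ≤ ∫⁻ x in Ioi t, ENNReal.ofReal (t⁻¹ * (x * exp (-a * x ^ 2))) := by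
        refine setLIntegral_mono (by fun_prop) fun x (hx : t < x) => ENNReal.ofReal_le_ofReal ?_
        rw [← mul_assoc, le_mul_iff_one_le_left (exp_pos _), le_inv_mul_iff₀ ht, mul_one]
        exact hx.le
    _ = ENNReal.ofReal (∫ x in Ioi t, t⁻¹ * (x * exp (-a * x ^ 2))) := by
        refine (ofReal_integral_eq_lintegral_ofReal
          ((integrable_mul_exp_neg_mul_sq ha).integrableOn.const_mul _) ?_).symm
        filter_upwards [ae_restrict_mem measurableSet_Ioi] with x (hx : t < x)
        have : 0 < x := ht.trans hx
        positivity
    _ = ENNReal.ofReal (exp (-a * t ^ 2) / (2 * a * t)) := by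
        rw [integral_const_mul, integral_Ioi_mul_exp_neg_mul_sq ha]
        field_simp

theorem lintegral_Ioi_comp_add_right (g : ℝ → ENNReal) (hg : Measurable g) (t : ℝ) :
    ∫⁻ x in Ioi 0, g (x + t) = ∫⁻ x in Ioi t, g x := by
  conv_rhs => rw [← map_add_right_eq_self volume t]
  rw [setLIntegral_map measurableSet_Ioi hg (measurable_add_const t), preimage_add_const_Ioi,
    sub_self]

theorem lintegral_posPart_sub_le_of_tail_le {Ω : Type*} [MeasurableSpace Ω] {μ : Measure Ω}
    {f : Ω → ℝ} (hf : Measurable f) {a t : ℝ} (ha : 0 < a) (ht : 0 < t)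
    (htail : ∀ x, t < x → μ {ω | x ≤ f ω} ≤ ENNReal.ofReal (exp (-a * x ^ 2))) :
    ∫⁻ ω, ENNReal.ofReal (f ω - t)⁺ ∂μ ≤ ENNReal.ofReal (exp (-a * t ^ 2) / (2 * a * t)) :=
  calc ∫⁻ ω, ENNReal.ofReal (f ω - t)⁺ ∂μ
      = ∫⁻ x in Ioi 0, μ {ω | x ≤ (f ω - t)⁺} :=
        lintegral_eq_lintegral_meas_le μ (ae_of_all _ fun _ => posPart_nonneg _)
          (hf.sub_const t).posPart.aemeasurable
    _ = ∫⁻ x in Ioi 0, μ {ω | x + t ≤ f ω} := by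
        refine setLIntegral_congr_fun measurableSet_Ioi fun x (hx : 0 < x) => ?_
        simp only [posPart_def, le_sup_iff, hx.not_ge, or_false, le_sub_iff_add_le]
    _ = ∫⁻ x in Ioi t, μ {ω | x ≤ f ω} :=
        lintegral_Ioi_comp_add_right _ (Antitone.measurable fun x y hxy =>
          measure_mono fun ω (h : y ≤ f ω) => hxy.trans h) t
    _ ≤ ∫⁻ x in Ioi t, ENNReal.ofReal (exp (-a * x ^ 2)) :=
        setLIntegral_mono (by fun_prop) htail
    _ ≤ ENNReal.ofReal (exp (-a * t ^ 2) / (2 * a * t)) := lintegral_Ioi_exp_neg_mul_sq_le ha ht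

theorem sum_le_sum_posPart_sub_add {ι : Type*} (s : Finset ι) (x : ι → ℝ) (t : ℝ) :
    ∑ k ∈ s, x k ≤ ∑ k ∈ s, (x k - t)⁺ + #s * t := by
  rw [← nsmul_eq_mul, ← sum_const, ← sum_add_distrib]
  exact sum_le_sum fun k _ => sub_le_iff_le_add.1 (le_posPart _)

theorem measure_le_sum_le_of_tail_le {Ω ι : Type*} [MeasurableSpace Ω] {μ : Measure Ω}
    (s : Finset ι) {X : ι → Ω → ℝ} (hX : ∀ k ∈ s, Measurable (X k)) {a t C : ℝ} (ha : 0 < a)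
    (ht : 0 < t) (htC : #s * t < C)
    (htail : ∀ k ∈ s, ∀ x, t < x → μ {ω | x ≤ X k ω} ≤ ENNReal.ofReal (exp (-a * x ^ 2))) :
    μ {ω | C ≤ ∑ k ∈ s, X k ω} ≤
      ENNReal.ofReal (#s * (exp (-a * t ^ 2) / (2 * a * t)) / (C - #s * t)) := by
  set B := exp (-a * t ^ 2) / (2 * a * t)
  have hgap : 0 < C - #s * t := sub_pos.2 htC
  calc μ {ω | C ≤ ∑ k ∈ s, X k ω}
      ≤ μ {ω | ENNReal.ofReal (C - #s * t) ≤ ∑ k ∈ s, ENNReal.ofReal (X k ω - t)⁺} := by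
        refine measure_mono fun ω (hω : C ≤ _) => ?_
        rw [Set.mem_ofPred_eq, ← ENNReal.ofReal_sum_of_nonneg fun k _ => posPart_nonneg _]
        exact ENNReal.ofReal_le_ofReal
          (by linarith [sum_le_sum_posPart_sub_add s (fun k => X k ω) t])
    _ ≤ (∫⁻ ω, ∑ k ∈ s, ENNReal.ofReal (X k ω - t)⁺ ∂μ) / ENNReal.ofReal (C - #s * t) :=
        meas_ge_le_lintegral_div (Finset.aemeasurable_fun_sum s fun k hk =>
          ((hX k hk).sub_const t).posPart.ennreal_ofReal.aemeasurable)
          (by simpa using hgap) ENNReal.ofReal_ne_top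
    _ ≤ (#s * ENNReal.ofReal B) / ENNReal.ofReal (C - #s * t) := by
        gcongr
        rw [lintegral_finsetSum _ fun k hk => ((hX k hk).sub_const t).posPart.ennreal_ofReal]
        calc ∑ k ∈ s, ∫⁻ ω, ENNReal.ofReal (X k ω - t)⁺ ∂μ ≤ ∑ k ∈ s, ENNReal.ofReal B :=
              sum_le_sum fun k hk =>
                lintegral_posPart_sub_le_of_tail_le (hX k hk) ha ht (htail k hk)
          _ = #s * ENNReal.ofReal B := by rw [sum_const, nsmul_eq_mul]
    _ = ENNReal.ofReal (#s * B / (C - #s * t)) := by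
        rw [ENNReal.ofReal_div_of_pos hgap, ENNReal.ofReal_mul (by positivity),
          ENNReal.ofReal_natCast]

theorem robust_aggregation_subgaussian_bound_general
    {Ω : Type*} [MeasurableSpace Ω] (P : Measure Ω)
    (K : ℕ) (hK : 1 ≤ K) (X : ℕ → Ω → ℝ) (a N : ℝ) (hN : 0 < N)
    (ha : a = K / (2 * N))
    (hmeas : ∀ k, Measurable (X k))
    (htail : ∀ k ∈ Finset.range K, ∀ x : ℝ, 0 ≤ x →
      P {ω | x ≤ X k ω} ≤ ENNReal.ofReal (Real.exp (-a * x ^ 2)))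
    (C : ℝ) (hC : 0 < C) :
    P {ω | C ≤ ∑ k ∈ Finset.range K, X k ω} ≤
      ENNReal.ofReal ((4 * K * N / C ^ 2) * Real.exp (-(C ^ 2) / (8 * K * N))) := by
  have hK0 : (0 : ℝ) < K := by exact_mod_cast hK
  set t := C / (2 * K) with ht_def
  have ht : 0 < t := by positivity
  have hKt : #(range K) * t = C / 2 := by rw [card_range, ht_def]; field_simp
  refine (measure_le_sum_le_of_tail_le (range K) (fun k _ => hmeas k) (C := C)
    (by rw [ha]; positivity) ht (by linarith)
    fun k hk x hx => htail k hk x (ht.trans hx).le).trans_eq (congrArg ENNReal.ofReal ?_)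
  rw [hKt, card_range, ht_def, ha]
  field_simp
  ring_nf

theorem robust_aggregation_subgaussian_bound
    {Ω : Type*} [MeasurableSpace Ω] (P : Measure Ω) [IsProbabilityMeasure P]
    (K : ℕ) (hK : 1 ≤ K) (X : ℕ → Ω → ℝ) (a N : ℝ) (hN : 0 < N)
    (ha : a = K / (2 * N))
    (hmeas : ∀ k, Measurable (X k))
    (hnn : ∀ k ω, 0 ≤ X k ω)
    (htail : ∀ k ∈ Finset.range K, ∀ x : ℝ, 0 ≤ x →
      P {ω | x ≤ X k ω} ≤ ENNReal.ofReal (Real.exp (-a * x ^ 2)))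
    (C : ℝ) (hC : 0 < C) :
    P {ω | C ≤ ∑ k ∈ Finset.range K, X k ω} ≤
      ENNReal.ofReal ((4 * K * N / C ^ 2) * Real.exp (-(C ^ 2) / (8 * K * N))) :=
  robust_aggregation_subgaussian_bound_general P K hK X a N hN ha hmeas htail C hC
end

section
/- Let $X_1,\dots,X_m$ be i.i.d. Rademacher random variables ($\pm 1$ with probability $1/2$ each) and define $Y_n := X_{\lceil n/K \rceil}$ for $n = 1,\dots,N$ where $N = mK$. Let $(\mathcal{F}_n)$ be the filtration generated by $(Y_n)$. Then for every $n$, $\mathbb{E}(Y_n \mid \mathcal{F}_{n-K}) = 0$ a.s., and consequently $\sum_{n=1}^N (Y_n - \mathbb{E}(Y_n \mid \mathcal{F}_{n-K})) = K \sum_{i=1}^m X_i$ a.s. -/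
open MeasureTheory ProbabilityTheory

/-- The filtration generated by a sequence `Y` indexed by `ℤ`, starting from index 1:
`natFiltration Y n = σ(Y 1, …, Y n)`, trivial for `n < 1`. -/
def natFiltration {Ω : Type*} (Y : ℤ → Ω → ℝ) (n : ℤ) : MeasurableSpace Ω :=
  ⨆ i ∈ Set.Icc (1 : ℤ) n, MeasurableSpace.comap (Y i) inferInstance

/-! `Y n` belongs to block `⌈n / K⌉`, whereas `natFiltration Y (n - K)` is generated by variables
of strictly earlier blocks, hence is independent of `X ⌈n / K⌉`. So the conditional expectation
is the mean of a Rademacher variable, namely `0`, and the remaining sum counts every `X i` once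
for each of the `K` steps of its block. -/

section Rademacher

variable {Ω : Type*} [MeasurableSpace Ω] {P : Measure Ω} [IsProbabilityMeasure P] {f : Ω → ℝ}

lemma ae_eq_one_or_eq_neg_one_of_rademacher (hf : Measurable f)
    (h₁ : P {ω | f ω = 1} = 1 / 2) (h₂ : P {ω | f ω = -1} = 1 / 2) :
    ∀ᵐ ω ∂P, f ω = 1 ∨ f ω = -1 := by
  have hA : MeasurableSet {ω | f ω = 1} := hf (measurableSet_singleton _)
  have hB : MeasurableSet {ω | f ω = -1} := hf (measurableSet_singleton _)
  have hdisj : Disjoint {ω | f ω = 1} {ω | f ω = -1} :=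
    Set.disjoint_left.2 fun ω (h : f ω = 1) (h' : f ω = -1) => by norm_num [h] at h'
  refine (ae_iff_measure_eq (p := fun ω => f ω = 1 ∨ f ω = -1)
    (hA.union hB).nullMeasurableSet).2 ?_
  rw [Set.ofPred_or, measure_union hdisj hB, h₁, h₂, ENNReal.add_halves, measure_univ]

lemma integral_eq_zero_of_rademacher (hf : Measurable f)
    (h₁ : P {ω | f ω = 1} = 1 / 2) (h₂ : P {ω | f ω = -1} = 1 / 2) :
    ∫ ω, f ω ∂P = 0 := by
  have hA : MeasurableSet {ω | f ω = 1} := hf (measurableSet_singleton _)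
  have hB : MeasurableSet {ω | f ω = -1} := hf (measurableSet_singleton _)
  have hf_eq : f =ᵐ[P] {ω | f ω = 1}.indicator 1 - {ω | f ω = -1}.indicator 1 := by
    filter_upwards [ae_eq_one_or_eq_neg_one_of_rademacher hf h₁ h₂] with ω hω
    rcases hω with h | h <;> norm_num [Set.indicator, h]
  rw [integral_congr_ae hf_eq, integral_sub' ((integrable_const 1).indicator hA)
    ((integrable_const 1).indicator hB), integral_indicator_one hA, integral_indicator_one hB,
    measureReal_def, measureReal_def, h₁, h₂, sub_self]

end Rademacher

section Blocks

variable {K : ℕ}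

lemma ceil_intCast_div_natCast_eq_iff (hK : 0 < K) {n i : ℤ} :
    ⌈(n : ℚ) / K⌉ = i ↔ (i - 1) * K < n ∧ n ≤ i * K := by
  have hKQ : (0 : ℚ) < K := by exact_mod_cast hK
  rw [Int.ceil_eq_iff, lt_div_iff₀ hKQ, div_le_iff₀ hKQ]
  norm_cast

lemma ceil_intCast_div_natCast_lt_of_le_sub (hK : 0 < K) {i n : ℤ} (h : i ≤ n - K) :
    ⌈(i : ℚ) / K⌉ < ⌈(n : ℚ) / K⌉ := by
  have hKQ : (0 : ℚ) < K := by exact_mod_cast hK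
  calc ⌈(i : ℚ) / K⌉ ≤ ⌈((n : ℚ) - K) / K⌉ := Int.ceil_mono (by gcongr; exact_mod_cast h)
    _ = ⌈(n : ℚ) / K⌉ - 1 := by rw [sub_div, div_self hKQ.ne', Int.ceil_sub_one]
    _ < ⌈(n : ℚ) / K⌉ := sub_one_lt _

lemma sum_Icc_ceil_div_natCast {M : Type*} [AddCommMonoid M] (hK : 0 < K) (m : ℕ) (f : ℤ → M) :
    ∑ n ∈ Finset.Icc (1 : ℤ) (m * K), f ⌈(n : ℚ) / K⌉ = K • ∑ i ∈ Finset.Icc (1 : ℤ) m, f i := by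
  have hKZ : (0 : ℤ) < K := by exact_mod_cast hK
  have maps_to : ∀ n ∈ Finset.Icc (1 : ℤ) (m * K), ⌈(n : ℚ) / K⌉ ∈ Finset.Icc (1 : ℤ) m := by
    intro n hn
    obtain ⟨hlo, hhi⟩ := (ceil_intCast_div_natCast_eq_iff hK).1 rfl
    rw [Finset.mem_Icc] at hn ⊢
    constructor <;> nlinarith
  rw [← Finset.sum_fiberwise_of_maps_to' maps_to, Finset.smul_sum]
  refine Finset.sum_congr rfl fun i hi => ?_
  rw [Finset.mem_Icc] at hi
  have fiber : (Finset.Icc (1 : ℤ) (m * K)).filter (fun n : ℤ => ⌈(n : ℚ) / K⌉ = i) =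
      Finset.Ioc ((i - 1) * K) (i * K) := by
    ext n
    rw [Finset.mem_filter, Finset.mem_Icc, Finset.mem_Ioc, ceil_intCast_div_natCast_eq_iff hK]
    constructor
    · exact And.right
    · rintro ⟨hlo, hhi⟩
      exact ⟨⟨by nlinarith, by nlinarith⟩, hlo, hhi⟩
  rw [Finset.sum_const, fiber, Int.card_Ioc, sub_mul, one_mul, sub_sub_cancel, Int.toNat_natCast]

end Blocks

lemma indep_comap_natFiltration_of_ne {Ω ι : Type*} [MeasurableSpace Ω] {P : Measure Ω}
    {X : ι → Ω → ℝ} (hmeas : ∀ i, Measurable (X i)) (hindep : iIndepFun X P)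
    {Y : ℤ → Ω → ℝ} {g : ℤ → ι} (hY : ∀ n, Y n = X (g n)) {j : ι} {n : ℤ}
    (hg : ∀ i ∈ Set.Icc 1 n, g i ≠ j) :
    Indep (MeasurableSpace.comap (X j) inferInstance) (natFiltration Y n) P := by
  have h := indep_biSup_compl (fun i => (hmeas i).comap_le) hindep {j}
  rw [iSup_singleton] at h
  refine indep_of_indep_of_le_right h (iSup₂_le fun i hi => ?_)
  rw [hY i]
  exact le_iSup₂ (f := fun k (_ : k ∈ ({j} : Set ι)ᶜ) => MeasurableSpace.comap (X k) inferInstance)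
    (g i) (hg i hi)

lemma condExp_block_eq_zero {Ω : Type*} [m0 : MeasurableSpace Ω] {P : Measure Ω}
    [IsProbabilityMeasure P] {K : ℕ} (hK : 0 < K) {X : ℤ → Ω → ℝ}
    (hmeas : ∀ i, Measurable (X i)) (hindep : iIndepFun X P)
    (hdist : ∀ i, P {ω | X i ω = 1} = 1 / 2 ∧ P {ω | X i ω = -1} = 1 / 2)
    {Y : ℤ → Ω → ℝ} (hY : ∀ n : ℤ, Y n = X ⌈(n : ℚ) / (K : ℚ)⌉) (n : ℤ) :
    P[Y n|natFiltration Y (n - K)] =ᵐ[P] 0 := by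
  set j := ⌈(n : ℚ) / (K : ℚ)⌉
  have hindep_past := indep_comap_natFiltration_of_ne hmeas hindep hY (j := j) (n := n - K)
    fun i hi => (ceil_intCast_div_natCast_lt_of_le_sub hK hi.2).ne
  have hle : natFiltration Y (n - K) ≤ m0 := iSup₂_le fun i _ => (hY i ▸ hmeas _).comap_le
  rw [hY n]
  refine (condExp_indep_eq (hmeas j).comap_le hle (comap_measurable (X j)).stronglyMeasurable
    hindep_past).trans ?_
  rw [integral_eq_zero_of_rademacher (hmeas j) (hdist j).1 (hdist j).2]
  rfl

theorem block_rademacher_condexp_general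
    {Ω : Type*} [m0 : MeasurableSpace Ω] (P : Measure Ω) [IsProbabilityMeasure P]
    (m K N : ℕ) (hK : 1 ≤ K) (hN : N = m * K)
    (X : ℤ → Ω → ℝ)
    (hmeas : ∀ i, Measurable (X i))
    (hindep : iIndepFun X P)
    (hdist : ∀ i, P {ω | X i ω = 1} = 1 / 2 ∧ P {ω | X i ω = -1} = 1 / 2)
    (Y : ℤ → Ω → ℝ) (hY : ∀ n : ℤ, Y n = X ⌈(n : ℚ) / (K : ℚ)⌉) :
    (∀ n ∈ Finset.Icc (1 : ℤ) N, P[Y n|natFiltration Y (n - K)] =ᵐ[P] 0) ∧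
      (∀ᵐ ω ∂P,
        ∑ n ∈ Finset.Icc (1 : ℤ) N, (Y n ω - (P[Y n|natFiltration Y (n - K)]) ω) =
          (K : ℝ) * ∑ i ∈ Finset.Icc (1 : ℤ) m, X i ω) := by
  have hcond := condExp_block_eq_zero hK hmeas hindep hdist hY
  refine ⟨fun n _ => hcond n, ?_⟩
  filter_upwards [ae_all_iff.2 hcond] with ω hω
  simp only [hω, Pi.zero_apply, sub_zero]
  rw [hN, Nat.cast_mul, funext hY, sum_Icc_ceil_div_natCast hK m (fun i => X i ω), nsmul_eq_mul]

theorem block_rademacher_condexp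
    {Ω : Type*} [m0 : MeasurableSpace Ω] (P : Measure Ω) [IsProbabilityMeasure P]
    (m K N : ℕ) (hK : 1 ≤ K) (hm : 1 ≤ m) (hN : N = m * K)
    (X : ℤ → Ω → ℝ)
    (hmeas : ∀ i, Measurable (X i))
    (hindep : iIndepFun X P)
    (hdist : ∀ i, P {ω | X i ω = 1} = 1 / 2 ∧ P {ω | X i ω = -1} = 1 / 2)
    (Y : ℤ → Ω → ℝ) (hY : ∀ n : ℤ, Y n = X ⌈(n : ℚ) / (K : ℚ)⌉) :
    (∀ n ∈ Finset.Icc (1 : ℤ) N, P[Y n|natFiltration Y (n - K)] =ᵐ[P] 0) ∧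
      (∀ᵐ ω ∂P,
        ∑ n ∈ Finset.Icc (1 : ℤ) N, (Y n ω - (P[Y n|natFiltration Y (n - K)]) ω) =
          (K : ℝ) * ∑ i ∈ Finset.Icc (1 : ℤ) m, X i ω) :=
  block_rademacher_condexp_general (m0 := m0) P m K N hK hN X hmeas hindep hdist Y hY
end

section
/- Consider a decision-making setup: a measurable decision space $(\mathbf{D},\mathcal{D})$, a filtration $(\mathcal{F}_n)_{n\in\mathbb{Z}}$, and for each $n$ a loss function $\lambda_n : \Omega \times \mathbf{D} \to [0,1]$ that is $\mathcal{F}_{n+K} \times \mathcal{D}$-measurable, where $K \ge 1$ is the impact horizon. A decision strategy is a sequence $(A_n)$ of $\mathcal{F}_n/\mathcal{D}$-measurable maps $A_n : \Omega \to \mathbf{D}$, with total loss $\mathrm{Loss}_N(A) = \sum_{n=1}^N \lambda_n(A_n)$. Suppose $B$ is a Bayesian strategy, i.e., $\mathbb{E}(\lambda_n(B_n)\mid\mathcal{F}_n) \le \mathbb{E}(\lambda_n(A_n)\mid\mathcal{F}_n)$ a.s. for every $n$ and every decision strategy $A$. Then for every $\epsilon \in (0,0.7)$, every decision strategy $A$,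 and every $N$: $P\left(\mathrm{Loss}_N(B) - \mathrm{Loss}_N(A) \ge 4\sqrt{K(N+K)\ln(1/\epsilon)}\right) < \epsilon$. -/
/-! The increments `Y n = λₙ(Bₙ) - λₙ(Aₙ)` take values in `[-1, 1]`, are `ℱ (n + K)`-measurable and
have nonpositive conditional mean given `ℱ n`. Within one residue class `a + r + Kℕ` they form a
supermartingale-difference sequence for the filtration sampled every `K` steps, so the conditional
Hoeffding lemma bounds the exponential moment of each class sum as in Azuma's inequality. Jensen's
inequality for `exp` recombines the `K` classes at the price of a factor `K` in the exponent, and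
a Chernoff bound then gives the tail `exp (-t² / (2K(N + K)))`, which equals `ε⁸ < ε` at
`t = 4 √(K (N + K) log (1/ε))`. -/

open MeasureTheory ProbabilityTheory

variable {Ω D : Type*}

/-- A decision strategy: an adapted sequence of decision-valued random elements. -/
def IsStrategy [m0 : MeasurableSpace Ω] [mD : MeasurableSpace D]
    (ℱ : Filtration ℤ m0) (A : ℤ → Ω → D) : Prop :=
  ∀ n : ℤ, Measurable[ℱ n] (A n)

open Real Finset

lemma abs_sum_le_card {ι : Type*} (s : Finset ι) {f : ι → ℝ} (hf : ∀ i, |f i| ≤ 1) :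
    |∑ i ∈ s, f i| ≤ #s :=
  (abs_sum_le_sum_abs _ _).trans <| by simpa using sum_le_sum fun i (_ : i ∈ s) => hf i

lemma sum_Icc_one_int_eq_sum_range {M : Type*} [AddCommMonoid M] (f : ℤ → M) (N : ℕ) :
    ∑ n ∈ Icc (1 : ℤ) N, f n = ∑ i ∈ range N, f (1 + i) := by
  have h_image : Icc (1 : ℤ) N = (range N).image fun i : ℕ => 1 + (i : ℤ) := by
    ext n
    simp only [mem_Icc, mem_image, mem_range]
    exact ⟨fun h => ⟨(n - 1).toNat, by omega, by omega⟩, by rintro ⟨i, hi, rfl⟩; omega⟩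
  rw [h_image, sum_image fun i _ j _ h => by simpa using h]

lemma sum_range_mul_eq_sum_sum {M : Type*} [AddCommMonoid M] (f : ℕ → M) (m k : ℕ) :
    ∑ i ∈ range (m * k), f i = ∑ r ∈ range k, ∑ q ∈ range m, f (q * k + r) := by
  rw [sum_comm]
  induction m with
  | zero => simp
  | succ m ih => rw [sum_range_succ, ← ih, Nat.succ_mul, sum_range_add]

def MeasureTheory.Filtration.precomp {ι κ : Type*} [Preorder ι] [Preorder κ]
    {m : MeasurableSpace Ω} (ℱ : Filtration ι m) (f : κ → ι) (hf : Monotone f) :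
    Filtration κ m where
  seq k := ℱ (f k)
  mono' _ _ h := ℱ.mono (hf h)
  le' _ := ℱ.le _

section Concentration

variable {m m0 : MeasurableSpace Ω} {P : Measure Ω}

lemma integrable_exp_mul_of_abs_le [IsFiniteMeasure P] {X : Ω → ℝ} (hX : Measurable X) {C : ℝ}
    (hC : ∀ ω, |X ω| ≤ C) (t : ℝ) : Integrable (fun ω => exp (t * X ω)) P := by
  refine Integrable.of_bound (hX.const_mul t).exp.aestronglyMeasurable (exp (|t| * C))
    (ae_of_all _ fun ω => ?_)
  rw [Real.norm_eq_abs, abs_exp, exp_le_exp]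
  calc t * X ω ≤ |t * X ω| := le_abs_self _
    _ = |t| * |X ω| := abs_mul _ _
    _ ≤ |t| * C := by gcongr; exact hC ω

lemma condExp_sub_nonpos_of_condExp_le {f g : Ω → ℝ} (hf : Integrable f P) (hg : Integrable g P)
    (h : P[f|m] ≤ᵐ[P] P[g|m]) : P[f - g|m] ≤ᵐ[P] 0 := by
  filter_upwards [condExp_sub hf hg m, h] with ω h_sub h_le
  exact h_sub.trans_le (sub_nonpos.mpr h_le)

/-- Conditional Hoeffding lemma: by convexity `exp (c z) ≤ cosh c + z sinh c` on `[-1, 1]`,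
and `sinh c ≥ 0`. -/
lemma condExp_exp_mul_le_of_condExp_nonpos [IsProbabilityMeasure P]
    (hm : m ≤ m0) {Z : Ω → ℝ} (hZ : Measurable Z) (hZ_abs : ∀ ω, |Z ω| ≤ 1)
    (hZ_cond : P[Z|m] ≤ᵐ[P] 0) {c : ℝ} (hc : 0 ≤ c) :
    P[fun ω => exp (c * Z ω)|m] ≤ᵐ[P] fun _ => exp (c ^ 2 / 2) := by
  have hZ_int : Integrable Z P :=
    .of_bound hZ.aestronglyMeasurable 1 (ae_of_all _ fun ω => (norm_eq_abs _).trans_le (hZ_abs ω))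
  have h_chord : P[fun ω => exp (c * Z ω)|m] ≤ᵐ[P] P[fun ω => cosh c + sinh c * Z ω|m] :=
    condExp_mono (integrable_exp_mul_of_abs_le hZ hZ_abs c)
      ((integrable_const _).add (hZ_int.const_mul _))
      (ae_of_all _ fun ω => by
        simpa [mul_comm] using exp_mul_le_cosh_add_mul_sinh (hZ_abs ω) c)
  have h_lin : P[fun ω => cosh c + sinh c * Z ω|m] =ᵐ[P]
      fun ω => cosh c + sinh c * P[Z|m] ω := by
    filter_upwards [condExp_add (integrable_const (cosh c)) (hZ_int.const_mul (sinh c)) m,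
      condExp_smul (μ := P) (sinh c) Z m] with ω h_add h_smul
    rw [condExp_const hm, Pi.add_apply] at h_add
    rw [Pi.smul_apply, smul_eq_mul] at h_smul
    exact h_add.trans (congrArg (cosh c + ·) h_smul)
  filter_upwards [h_chord, h_lin, hZ_cond] with ω h_chord h_lin h_nonpos
  have h_sinh := sinh_nonneg_iff.mpr hc
  calc P[fun ω => exp (c * Z ω)|m] ω ≤ cosh c + sinh c * P[Z|m] ω := h_lin ▸ h_chord
    _ ≤ cosh c := by simp only [Pi.zero_apply] at h_nonpos; nlinarith
    _ ≤ exp (c ^ 2 / 2) := cosh_le_exp_half_sq c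

lemma integral_exp_mul_sum_le_of_condExp_nonpos [IsProbabilityMeasure P] (𝒢 : Filtration ℕ m0)
    {Z : ℕ → Ω → ℝ} (hZ : ∀ q, Measurable[𝒢 (q + 1)] (Z q)) (hZ_abs : ∀ q ω, |Z q ω| ≤ 1)
    (hZ_cond : ∀ q, P[Z q|𝒢 q] ≤ᵐ[P] 0) {c : ℝ} (hc : 0 ≤ c) (M : ℕ) :
    ∫ ω, exp (c * ∑ q ∈ range M, Z q ω) ∂P ≤ exp (M * c ^ 2 / 2) := by
  have hS : ∀ M, Measurable[𝒢 M] fun ω => ∑ q ∈ range M, Z q ω := fun M =>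
    measurable_sum _ fun q hq => (hZ q).mono (𝒢.mono (by simpa using hq)) le_rfl
  have h_int : ∀ M, Integrable (fun ω => exp (c * ∑ q ∈ range M, Z q ω)) P := fun M =>
    integrable_exp_mul_of_abs_le ((hS M).mono (𝒢.le M) le_rfl)
      (fun ω => abs_sum_le_card _ fun q => hZ_abs q ω) c
  induction M with
  | zero => simp
  | succ M ih =>
    set F := fun ω => exp (c * ∑ q ∈ range M, Z q ω)
    set G := fun ω => exp (c * Z M ω)
    have h_split : (fun ω => exp (c * ∑ q ∈ range (M + 1), Z q ω)) = F * G := by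
      ext ω
      simp only [F, G, Pi.mul_apply, sum_range_succ, mul_add, exp_add]
    have h_step : P[F * G|𝒢 M] ≤ᵐ[P] fun ω => F ω * exp (c ^ 2 / 2) := by
      filter_upwards [condExp_mul_of_stronglyMeasurable_left
          ((hS M).const_mul c).exp.stronglyMeasurable (h_split ▸ h_int (M + 1))
          (integrable_exp_mul_of_abs_le ((hZ M).mono (𝒢.le _) le_rfl) (hZ_abs M) c),
        condExp_exp_mul_le_of_condExp_nonpos (𝒢.le M) ((hZ M).mono (𝒢.le _) le_rfl)
          (hZ_abs M) (hZ_cond M) hc] with ω h_pull h_G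
      rw [h_pull]
      exact mul_le_mul_of_nonneg_left h_G (exp_pos _).le
    calc ∫ ω, exp (c * ∑ q ∈ range (M + 1), Z q ω) ∂P
        = ∫ ω, P[F * G|𝒢 M] ω ∂P := by rw [h_split, integral_condExp (𝒢.le M)]
      _ ≤ ∫ ω, F ω * exp (c ^ 2 / 2) ∂P :=
        integral_mono_ae integrable_condExp ((h_int M).mul_const _) h_step
      _ = (∫ ω, F ω ∂P) * exp (c ^ 2 / 2) := integral_mul_const _ _
      _ ≤ exp (M * c ^ 2 / 2) * exp (c ^ 2 / 2) := by gcongr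
      _ = exp ((M + 1 : ℕ) * c ^ 2 / 2) := by rw [← exp_add]; push_cast; congr 1; ring

variable (ℱ : Filtration ℤ m0) {K : ℕ} (hK : 0 < K) {Y : ℤ → Ω → ℝ}
  (hY : ∀ n, Measurable[ℱ (n + K)] (Y n)) (hY_abs : ∀ n ω, |Y n ω| ≤ 1)
  (hY_cond : ∀ n, P[Y n|ℱ n] ≤ᵐ[P] 0)
include hK hY hY_abs hY_cond

lemma integral_exp_mul_sum_range_mul_le [IsProbabilityMeasure P] (a : ℤ) (M : ℕ)
    {t : ℝ} (ht : 0 ≤ t) :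
    ∫ ω, exp (t * ∑ i ∈ range (M * K), Y (a + i) ω) ∂P ≤ exp (M * (K * t) ^ 2 / 2) := by
  set T : ℕ → Ω → ℝ := fun r ω => ∑ q ∈ range M, Y (a + (q * K + r : ℕ)) ω
  have hK' : (0 : ℝ) < K := by exact_mod_cast hK
  have hT_int : ∀ r, Integrable (fun ω => exp (K * t * T r ω)) P := fun r =>
    integrable_exp_mul_of_abs_le (measurable_sum _ fun _ _ => (hY _).mono (ℱ.le _) le_rfl)
      (fun ω => abs_sum_le_card _ fun q => hY_abs _ ω) _
  have hT : ∀ r, ∫ ω, exp (K * t * T r ω) ∂P ≤ exp (M * (K * t) ^ 2 / 2) := by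
    intro r
    have h_mono : Monotone fun q : ℕ => a + r + q * K := fun _ _ h => by dsimp only; gcongr
    refine le_of_le_of_eq (integral_exp_mul_sum_le_of_condExp_nonpos (ℱ.precomp _ h_mono)
      (fun q => ?_) (fun q ω => hY_abs _ ω) (fun q => ?_) (by positivity) M) (by simp)
    · change Measurable[ℱ (a + r + (q + 1 : ℕ) * K)] _
      convert hY (a + (q * K + r : ℕ)) using 2
      push_cast; ring
    · change P[_|ℱ (a + r + q * K)] ≤ᵐ[P] 0
      convert hY_cond (a + (q * K + r : ℕ)) using 3
      push_cast; ring
  have h_jensen : ∀ ω, exp (t * ∑ i ∈ range (M * K), Y (a + i) ω)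
      ≤ ∑ r ∈ range K, (K : ℝ)⁻¹ * exp (K * t * T r ω) := by
    intro ω
    have h_sum : t * ∑ i ∈ range (M * K), Y (a + i) ω
        = ∑ r ∈ range K, (K : ℝ)⁻¹ * (K * t * T r ω) := by
      rw [sum_range_mul_eq_sum_sum (fun i => Y (a + i) ω), mul_sum]
      refine sum_congr rfl fun r _ => ?_
      field_simp
      rfl
    rw [h_sum]
    simpa only [smul_eq_mul] using convexOn_exp.map_sum_le (t := range K)
      (w := fun _ => (K : ℝ)⁻¹) (p := fun r => K * t * T r ω) (fun _ _ => by positivity)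
      (by simp [hK'.ne']) (fun _ _ => Set.mem_univ _)
  calc ∫ ω, exp (t * ∑ i ∈ range (M * K), Y (a + i) ω) ∂P
      ≤ ∫ ω, ∑ r ∈ range K, (K : ℝ)⁻¹ * exp (K * t * T r ω) ∂P :=
        integral_mono_of_nonneg (ae_of_all _ fun _ => (exp_pos _).le)
          (integrable_finsetSum _ fun r _ => (hT_int r).const_mul _) (ae_of_all _ h_jensen)
    _ = ∑ r ∈ range K, (K : ℝ)⁻¹ * ∫ ω, exp (K * t * T r ω) ∂P := by
        rw [integral_finsetSum _ fun r _ => (hT_int r).const_mul _]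
        simp only [integral_const_mul]
    _ ≤ ∑ r ∈ range K, (K : ℝ)⁻¹ * exp (M * (K * t) ^ 2 / 2) := by gcongr with r; exact hT r
    _ = exp (M * (K * t) ^ 2 / 2) := by simp [hK'.ne']

lemma integral_exp_mul_sum_Icc_le [IsProbabilityMeasure P] (N : ℕ) {t : ℝ} (ht : 0 ≤ t) :
    ∫ ω, exp (t * ∑ n ∈ Icc (1 : ℤ) N, Y n ω) ∂P ≤ exp (K * (N + K) * t ^ 2 / 2) := by
  -- Pad `Y` by zeros after time `N` to `M` whole blocks of length `K`; `M K ≤ N + K` is where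
  -- the factor `N + K` comes from.
  set M := N / K + 1
  have hNM : N ≤ M * K := by simpa [M, add_mul] using (Nat.lt_div_mul_add hK (a := N)).le
  have hMN : M * K ≤ N + K := by simpa [M, add_mul] using Nat.div_mul_le_self N K
  set Y' : ℤ → Ω → ℝ := fun n => if n ≤ N then Y n else 0
  have h_sum : ∀ ω, ∑ n ∈ Icc (1 : ℤ) N, Y n ω = ∑ i ∈ range (M * K), Y' (1 + i) ω := by
    intro ω
    rw [sum_Icc_one_int_eq_sum_range, ← sum_subset (range_subset_range.mpr hNM)]
    · refine sum_congr rfl fun i hi => ?_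
      simp [Y', show (1 + i : ℤ) ≤ N by simp at hi; omega]
    · intro i _ hi
      simp [Y', show ¬ (1 + i : ℤ) ≤ N by simp at hi; omega]
  have hY'_bound := integral_exp_mul_sum_range_mul_le ℱ hK (Y := Y')
    (fun n => by unfold Y'; split_ifs; exacts [hY n, measurable_const])
    (fun n ω => by unfold Y'; split_ifs; exacts [hY_abs n ω, by simp])
    (fun n => by unfold Y'; split_ifs; exacts [hY_cond n, by rw [condExp_zero]]) 1 M ht
  simp_rw [h_sum]
  refine hY'_bound.trans (exp_le_exp.mpr ?_)
  have hMN' : (M : ℝ) * K ≤ N + K := by exact_mod_cast hMN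
  calc (M : ℝ) * (K * t) ^ 2 / 2 = M * K * (K * t ^ 2) / 2 := by ring
    _ ≤ (N + K) * (K * t ^ 2) / 2 := by gcongr
    _ = K * (N + K) * t ^ 2 / 2 := by ring

lemma measureReal_sum_Icc_ge_le [IsProbabilityMeasure P] (N : ℕ) {s : ℝ} (hs : 0 ≤ s) :
    P.real {ω | s ≤ ∑ n ∈ Icc (1 : ℤ) N, Y n ω} ≤ exp (-s ^ 2 / (2 * K * (N + K))) := by
  have hKN : (0 : ℝ) < K * (N + K) := by positivity
  set t := s / (K * (N + K))
  have h_mgf := integral_exp_mul_sum_Icc_le ℱ hK hY hY_abs hY_cond N (t := t) (by positivity)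
  calc P.real {ω | s ≤ ∑ n ∈ Icc (1 : ℤ) N, Y n ω}
      ≤ exp (-t * s) * mgf (fun ω => ∑ n ∈ Icc (1 : ℤ) N, Y n ω) P t :=
        measure_ge_le_exp_mul_mgf s (by positivity) (integrable_exp_mul_of_abs_le
          (measurable_sum _ fun _ _ => (hY _).mono (ℱ.le _) le_rfl)
          (fun ω => abs_sum_le_card _ fun n => hY_abs n ω) t)
    _ ≤ exp (-t * s) * exp (K * (N + K) * t ^ 2 / 2) := by gcongr; exact h_mgf
    _ = exp (-s ^ 2 / (2 * K * (N + K))) := by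
        rw [← exp_add]; congr 1; simp only [t]; field_simp; ring

end Concentration

section Strategies

variable [m0 : MeasurableSpace Ω] [mD : MeasurableSpace D] {ℱ : Filtration ℤ m0}
  {A : ℤ → Ω → D} {lam : Ω → D → ℝ} {n k : ℤ}

lemma IsStrategy.measurable_loss (hA : IsStrategy ℱ A) (hnk : n ≤ k)
    (hlam : Measurable[(ℱ k).prod mD] fun p : Ω × D => lam p.1 p.2) :
    Measurable[ℱ k] fun ω => lam ω (A n ω) :=
  hlam.comp (measurable_id.prodMk ((hA n).mono (ℱ.mono hnk) le_rfl))

lemma IsStrategy.integrable_loss {P : Measure Ω} [IsFiniteMeasure P] (hA : IsStrategy ℱ A)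
    (hnk : n ≤ k) (hlam : Measurable[(ℱ k).prod mD] fun p : Ω × D => lam p.1 p.2)
    (hrange : ∀ ω d, lam ω d ∈ Set.Icc (0 : ℝ) 1) :
    Integrable (fun ω => lam ω (A n ω)) P :=
  .of_bound ((hA.measurable_loss hnk hlam).mono (ℱ.le k) le_rfl).aestronglyMeasurable 1
    (ae_of_all _ fun ω => by
      rw [norm_eq_abs, abs_of_nonneg (hrange ω _).1]; exact (hrange ω _).2)

end Strategies

theorem bayesian_strategy_is_competitive
    [m0 : MeasurableSpace Ω] [mD : MeasurableSpace D]
    (P : Measure Ω) [IsProbabilityMeasure P]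
    (ℱ : Filtration ℤ m0) (K : ℕ) (hK : 1 ≤ K)
    (lam : ℤ → Ω → D → ℝ)
    (hrange : ∀ n ω d, lam n ω d ∈ Set.Icc (0 : ℝ) 1)
    (hlammeas : ∀ n : ℤ,
      Measurable[(ℱ (n + K)).prod mD] (fun p : Ω × D => lam n p.1 p.2))
    (B : ℤ → Ω → D) (hB : IsStrategy ℱ B)
    (hBayes : ∀ n : ℤ, ∀ A : ℤ → Ω → D, IsStrategy ℱ A →
      ∀ᵐ ω ∂P, (P[fun ω' => lam n ω' (B n ω')|ℱ n]) ω ≤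
        (P[fun ω' => lam n ω' (A n ω')|ℱ n]) ω)
    (ε : ℝ) (hε : ε ∈ Set.Ioo (0 : ℝ) 0.7)
    (A : ℤ → Ω → D) (hA : IsStrategy ℱ A) (N : ℕ) :
    P {ω | 4 * Real.sqrt (K * (N + K) * Real.log (1 / ε)) ≤
        ∑ n ∈ Finset.Icc (1 : ℤ) N, (lam n ω (B n ω) - lam n ω (A n ω))}
      < ENNReal.ofReal ε := by
  obtain ⟨hε_pos, hε_lt⟩ := hε
  have hL : 0 < log (1 / ε) := log_pos (one_lt_one_div hε_pos (by linarith))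
  have hnK (n : ℤ) : n ≤ n + K := le_add_of_nonneg_right (Nat.cast_nonneg K)
  have h_tail := measureReal_sum_Icc_ge_le (P := P) ℱ hK
    (Y := fun n ω => lam n ω (B n ω) - lam n ω (A n ω))
    (fun n => (hB.measurable_loss (hnK n) (hlammeas n)).sub
      (hA.measurable_loss (hnK n) (hlammeas n)))
    (fun n ω => abs_sub_le_of_nonneg_of_le (hrange n ω _).1 (hrange n ω _).2
      (hrange n ω _).1 (hrange n ω _).2)
    (fun n => condExp_sub_nonpos_of_condExp_le
      (hB.integrable_loss (hnK n) (hlammeas n) (hrange n))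
      (hA.integrable_loss (hnK n) (hlammeas n) (hrange n)) (hBayes n A hA))
    N (s := 4 * √(K * (N + K) * log (1 / ε))) (by positivity)
  have h_exponent : -(4 * √(K * (N + K) * log (1 / ε))) ^ 2 / (2 * K * (N + K))
      = (8 : ℕ) * log ε := by
    rw [mul_pow, sq_sqrt (mul_nonneg (by positivity) hL.le), one_div, log_inv]
    field_simp
    push_cast
    ring
  rw [h_exponent, exp_nat_mul, exp_log hε_pos] at h_tail
  rw [← ofReal_measureReal]
  exact (ENNReal.ofReal_lt_ofReal_iff hε_pos).mpr
    (h_tail.trans_lt (pow_lt_self_of_lt_one₀ hε_pos (by linarith) (by norm_num)))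
end
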